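/- Trace formula for the mass of the splitting scheme: let (Ω, ℱ, ℙ) be a probability space, u₀ ∈ L² deterministic, τ > 0, α > 0, and let (δW_n)_{n∈ℕ} be a mutually independent family of Borel-measurable L²-valued random variables, each Bochner integrable with 𝔼[δW_n] = 0 and 𝔼[‖δW_n‖²_{L²}] = c for a fixed constant c ∈ [0,∞). Define recursively u_{n+1} = S(τ)(Φ_τ(u_n) − i α δW_n). Then for every n ∈ ℕ, 𝔼[‖u_n‖²_{L²}] = ‖u₀‖²_{L²} + n α² c. (With c = τ·Tr(Q) this is the trace formula 𝔼[M(u_n)] = M(u₀) + t_n α² Tr(Q), t_n = nτ.) -/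

import Mathlib

open MeasureTheory Complex Real AddCircle ProbabilityTheory

noncomputable section

instance fact2pi : Fact (0 < 2 * Real.pi) := ⟨by positivity⟩

/-- `L²(𝕋, ℂ)` with respect to the Haar probability measure on the circle of length `2π`. -/
abbrev L2h := Lp ℂ 2 (@AddCircle.haarAddCircle (2 * Real.pi) _)

/-- The Fourier Hilbert basis `(e_k)_{k ∈ ℤ}` of `L²(𝕋, ℂ)`. -/
abbrev fourierB : HilbertBasis ℤ ℂ L2h := @fourierBasis (2 * Real.pi) _

/-- The convolution `V ⋆ |u|²`. -/
def Vconv (V : C(AddCircle (2 * Real.pi), ℝ)) (u : L2h) : AddCircle (2 * Real.pi) → ℝ :=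
  fun x => ∫ y, V (x - y) * ‖(u : AddCircle (2 * Real.pi) → ℂ) y‖ ^ 2 ∂(haarAddCircle)

/-- The flow map `Φ_t(u) = exp(−i t (V⋆|u|²))·u` as a function. -/
def PhiFun (V : C(AddCircle (2 * Real.pi), ℝ)) (t : ℝ) (u : L2h) :
    AddCircle (2 * Real.pi) → ℂ :=
  fun x => Complex.exp (-(Complex.I * t * (Vconv V u x))) * (u : AddCircle (2 * Real.pi) → ℂ) x

open Classical in
/-- `Φ_t(u)` as an element of `L²`. -/
def PhiL (V : C(AddCircle (2 * Real.pi), ℝ)) (t : ℝ) (u : L2h) : L2h :=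
  if h : MemLp (PhiFun V t u) 2 haarAddCircle then h.toLp _ else 0

/-! Both `Φ_τ` and `S(τ)` preserve the `L²`-norm, so
`‖u_{n+1}‖² = ‖Φ_τ(u_n)‖² - 2 Re⟪Φ_τ(u_n), iα δW_n⟫ + α² ‖δW_n‖²`.
Since `Φ_τ` is continuous, `u_n` is a measurable function of `δW_0, …, δW_{n-1}`; hence
`Φ_τ(u_n)` is independent of the centred `δW_n`, the cross term has mean zero, and
`𝔼‖u_{n+1}‖² = 𝔼‖u_n‖² + α² c`. -/

open scoped ENNReal InnerProductSpace

local notation "𝕋" => AddCircle (2 * Real.pi)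

instance L2h.secondCountableTopology : SecondCountableTopology L2h :=
  have : Fact ((2 : ℝ≥0∞) ≠ ∞) := ⟨ENNReal.ofNat_ne_top⟩
  Lp.SecondCountableTopology

namespace MeasureTheory.Lp

variable {α E F : Type*} [MeasurableSpace α] {μ : Measure α}
  [NormedAddCommGroup E] [NormedAddCommGroup F]

lemma integrable_norm_sq (f : Lp E 2 μ) : Integrable (fun x => ‖f x‖ ^ 2) μ :=
  (memLp_two_iff_integrable_sq_norm (Lp.aestronglyMeasurable f)).1 (Lp.memLp f)

lemma integrable_norm_mul_norm (f : Lp E 2 μ) (g : Lp F 2 μ) :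
    Integrable (fun x => ‖f x‖ * ‖g x‖) μ :=
  (Lp.memLp f).norm.integrable_mul (Lp.memLp g).norm

lemma integral_norm_mul_norm_le (f : Lp E 2 μ) (g : Lp F 2 μ) :
    ∫ x, ‖f x‖ * ‖g x‖ ∂μ ≤ ‖f‖ * ‖g‖ := by
  have hf := (Lp.memLp f).norm
  have hg := (Lp.memLp g).norm
  calc ∫ x, ‖f x‖ * ‖g x‖ ∂μ = ⟪hf.toLp _, hg.toLp _⟫_ℝ := by
        rw [L2.inner_def]
        refine integral_congr_ae ?_
        filter_upwards [hf.coeFn_toLp, hg.coeFn_toLp] with x h1 h2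
        simp [h1, h2, mul_comm]
    _ ≤ ‖hf.toLp _‖ * ‖hg.toLp _‖ := real_inner_le_norm _ _
    _ = ‖f‖ * ‖g‖ := by rw [Lp.norm_toLp, Lp.norm_toLp, eLpNorm_norm, eLpNorm_norm, Lp.norm_def,
        Lp.norm_def]

lemma integral_abs_norm_sq_sub_norm_sq_le (u v : Lp E 2 μ) :
    ∫ x, |‖u x‖ ^ 2 - ‖v x‖ ^ 2| ∂μ ≤ (‖u‖ + ‖v‖) * ‖u - v‖ := by
  have hle : ∀ᵐ x ∂μ, |‖u x‖ ^ 2 - ‖v x‖ ^ 2| ≤ ‖(u - v) x‖ * ‖u x‖ + ‖(u - v) x‖ * ‖v x‖ := by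
    filter_upwards [Lp.coeFn_sub u v] with x hx
    rw [hx, Pi.sub_apply, sq_sub_sq, abs_mul, abs_of_nonneg (by positivity : 0 ≤ ‖u x‖ + ‖v x‖),
      ← mul_add, mul_comm ‖u x - v x‖]
    gcongr
    exact abs_norm_sub_norm_le _ _
  calc ∫ x, |‖u x‖ ^ 2 - ‖v x‖ ^ 2| ∂μ
      ≤ ∫ x, (‖(u - v) x‖ * ‖u x‖ + ‖(u - v) x‖ * ‖v x‖) ∂μ :=
        integral_mono_of_nonneg (ae_of_all _ fun _ => abs_nonneg _)
          ((integrable_norm_mul_norm _ _).add (integrable_norm_mul_norm _ _)) hle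
    _ = ∫ x, ‖(u - v) x‖ * ‖u x‖ ∂μ + ∫ x, ‖(u - v) x‖ * ‖v x‖ ∂μ :=
        integral_add (integrable_norm_mul_norm _ _) (integrable_norm_mul_norm _ _)
    _ ≤ ‖u - v‖ * ‖u‖ + ‖u - v‖ * ‖v‖ :=
        add_le_add (integral_norm_mul_norm_le _ _) (integral_norm_mul_norm_le _ _)
    _ = (‖u‖ + ‖v‖) * ‖u - v‖ := by ring

end MeasureTheory.Lp

lemma Complex.norm_exp_neg_I_mul_ofReal (a : ℝ) : ‖exp (-(I * a))‖ = 1 := by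
  simpa using norm_exp_I_mul_ofReal (-a)

lemma Complex.norm_exp_neg_I_mul_ofReal_sub_le (a b : ℝ) :
    ‖exp (-(I * a)) - exp (-(I * b))‖ ≤ |a - b| := by
  have h : exp (-(I * a)) - exp (-(I * b)) = -(exp (-(I * a)) * (exp (I * ↑(a - b)) - 1)) := by
    rw [mul_sub, ← Complex.exp_add, mul_one]
    push_cast
    ring_nf
  rw [h, norm_neg, norm_mul, norm_exp_neg_I_mul_ofReal, one_mul]
  exact Real.norm_exp_I_mul_ofReal_sub_one_le

section Flow

variable (V : C(𝕋, ℝ)) (t : ℝ)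

lemma stronglyMeasurable_vconv (u : L2h) : StronglyMeasurable (Vconv V u) := by
  have hu := (Lp.stronglyMeasurable u).norm.pow 2
  exact ((V.continuous.comp (continuous_fst.sub continuous_snd)).stronglyMeasurable.mul
    (hu.comp_measurable measurable_snd)).integral_prod_right'

lemma abs_vconv_sub_vconv_le (u v : L2h) (x : 𝕋) :
    |Vconv V u x - Vconv V v x| ≤ ‖V‖ * ((‖u‖ + ‖v‖) * ‖u - v‖) := by
  have hV : ∀ᵐ y ∂haarAddCircle, ‖V (x - y)‖ ≤ ‖V‖ := ae_of_all _ fun y => V.norm_coe_le_norm _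
  have hVm : AEStronglyMeasurable (fun y => V (x - y)) haarAddCircle :=
    (V.continuous.comp (continuous_const.sub continuous_id)).aestronglyMeasurable
  have hu := (Lp.integrable_norm_sq u).bdd_mul hVm hV
  have hv := (Lp.integrable_norm_sq v).bdd_mul hVm hV
  rw [Vconv, Vconv, ← integral_sub hu hv, ← Real.norm_eq_abs]
  calc ‖∫ y, (V (x - y) * ‖u y‖ ^ 2 - V (x - y) * ‖v y‖ ^ 2) ∂haarAddCircle‖
      ≤ ∫ y, ‖V‖ * |‖u y‖ ^ 2 - ‖v y‖ ^ 2| ∂haarAddCircle := by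
        refine norm_integral_le_of_norm_le
          (((Lp.integrable_norm_sq u).sub (Lp.integrable_norm_sq v)).abs.const_mul _) ?_
        filter_upwards [hV] with y hy
        rw [← mul_sub, norm_mul, Real.norm_eq_abs (_ - _)]
        gcongr
    _ ≤ ‖V‖ * ((‖u‖ + ‖v‖) * ‖u - v‖) := by
        rw [integral_const_mul]
        gcongr
        exact Lp.integral_abs_norm_sq_sub_norm_sq_le u v

def phase (w : L2h) (x : 𝕋) : ℂ := exp (-(I * t * Vconv V w x))

lemma norm_phase (w : L2h) (x : 𝕋) : ‖phase V t w x‖ = 1 := by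
  simpa [phase, mul_assoc] using norm_exp_neg_I_mul_ofReal (t * Vconv V w x)

lemma norm_phase_sub_phase_le (w w' : L2h) (x : 𝕋) :
    ‖phase V t w x - phase V t w' x‖ ≤ |t| * (‖V‖ * ((‖w‖ + ‖w'‖) * ‖w - w'‖)) := by
  have h := norm_exp_neg_I_mul_ofReal_sub_le (t * Vconv V w x) (t * Vconv V w' x)
  push_cast at h
  rw [phase, phase, mul_assoc, mul_assoc]
  refine h.trans ?_
  rw [← mul_sub, abs_mul]
  gcongr
  exact abs_vconv_sub_vconv_le V w w' x

lemma memLp_phase_mul (w v : L2h) : MemLp (fun x => phase V t w x * v x) 2 haarAddCircle := by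
  have hphase : AEStronglyMeasurable (phase V t w) haarAddCircle :=
    (continuous_exp.comp_stronglyMeasurable (((continuous_ofReal.comp_stronglyMeasurable
      (stronglyMeasurable_vconv V w)).const_mul (I * t)).neg)).aestronglyMeasurable
  refine (Lp.memLp v).congr_norm (hphase.mul (Lp.aestronglyMeasurable v)) (ae_of_all _ fun x => ?_)
  rw [norm_mul, norm_phase, one_mul]

lemma coeFn_phiL (u : L2h) : PhiL V t u =ᵐ[haarAddCircle] PhiFun V t u := by
  rw [PhiL, dif_pos (show MemLp (PhiFun V t u) 2 _ from memLp_phase_mul V t u u)]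
  exact MemLp.coeFn_toLp _

lemma norm_phiL (u : L2h) : ‖PhiL V t u‖ = ‖u‖ := by
  rw [Lp.norm_def, Lp.norm_def]
  congr 1
  refine eLpNorm_congr_norm_ae ?_
  filter_upwards [coeFn_phiL V t u] with x hx
  rw [hx, PhiFun, ← phase, norm_mul, norm_phase, one_mul]

lemma norm_phiL_sub_phiL_le (u v : L2h) :
    ‖PhiL V t u - PhiL V t v‖ ≤ (1 + |t| * ‖V‖ * (‖u‖ + ‖v‖) * ‖v‖) * ‖u - v‖ := by
  -- triangle inequality through `ψ = phase V t u · v`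
  set ψ : L2h := (memLp_phase_mul V t u v).toLp
  have h₁ : ‖PhiL V t u - ψ‖ ≤ 1 * ‖u - v‖ := by
    refine Lp.norm_le_mul_norm_of_ae_le_mul ?_
    filter_upwards [Lp.coeFn_sub (PhiL V t u) ψ, coeFn_phiL V t u, MemLp.coeFn_toLp
      (memLp_phase_mul V t u v), Lp.coeFn_sub u v] with x h₁ h₂ h₃ h₄
    rw [h₁, Pi.sub_apply, h₂, h₃, h₄, Pi.sub_apply, PhiFun, ← phase, ← mul_sub, norm_mul,
      norm_phase]
  have h₂ : ‖ψ - PhiL V t v‖ ≤ (|t| * (‖V‖ * ((‖u‖ + ‖v‖) * ‖u - v‖))) * ‖v‖ := by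
    refine Lp.norm_le_mul_norm_of_ae_le_mul ?_
    filter_upwards [Lp.coeFn_sub ψ (PhiL V t v), coeFn_phiL V t v, MemLp.coeFn_toLp
      (memLp_phase_mul V t u v)] with x h₁ h₂ h₃
    rw [h₁, Pi.sub_apply, h₂, h₃, PhiFun, ← phase, ← sub_mul, norm_mul]
    gcongr
    exact norm_phase_sub_phase_le V t u v x
  calc ‖PhiL V t u - PhiL V t v‖ ≤ ‖PhiL V t u - ψ‖ + ‖ψ - PhiL V t v‖ :=
        norm_sub_le_norm_sub_add_norm_sub _ _ _
    _ ≤ _ := add_le_add h₁ h₂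
    _ = _ := by ring

lemma continuous_phiL : Continuous (PhiL V t) := by
  refine continuous_iff_continuousAt.2 fun v => tendsto_iff_norm_sub_tendsto_zero.2 ?_
  refine squeeze_zero (fun _ => norm_nonneg _) (fun u => norm_phiL_sub_phiL_le V t u v) ?_
  have : Continuous fun u : L2h => (1 + |t| * ‖V‖ * (‖u‖ + ‖v‖) * ‖v‖) * ‖u - v‖ := by fun_prop
  simpa using this.tendsto v

end Flow

section Recursion

lemma measurable_iSup_Iio_of_recursion {Ω β γ : Type*} [mβ : MeasurableSpace β]
    [MeasurableSpace γ] {X : ℕ → Ω → β} {F : γ → β → γ} (hF : Measurable (Function.uncurry F))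
    {u : ℕ → Ω → γ} {x₀ : γ} (hu0 : ∀ ω, u 0 ω = x₀)
    (hrec : ∀ n ω, u (n + 1) ω = F (u n ω) (X n ω)) (n : ℕ) :
    Measurable[⨆ i ∈ Set.Iio n, mβ.comap (X i)] (u n) := by
  induction n with
  | zero => simpa only [funext hu0] using measurable_const
  | succ n ih =>
    have hu : Measurable[⨆ i ∈ Set.Iio (n + 1), mβ.comap (X i)] (u n) :=
      ih.mono (biSup_mono fun i hi => Nat.lt_succ_of_lt hi) le_rfl
    have hX : Measurable[⨆ i ∈ Set.Iio (n + 1), mβ.comap (X i)] (X n) :=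
      Measurable.of_comap_le
        (le_iSup₂ (f := fun i (_ : i ∈ Set.Iio (n + 1)) => mβ.comap (X i)) n (Nat.lt_succ_self n))
    rw [funext (hrec n)]
    exact hF.comp (hu.prodMk hX)

variable {Ω : Type*} [MeasurableSpace Ω] {P : Measure Ω}

lemma ProbabilityTheory.indep_iSup_Iio_comap {β : Type*} [mβ : MeasurableSpace β]
    {X : ℕ → Ω → β} (hX : ∀ n, Measurable (X n)) (hind : iIndepFun X P) (n : ℕ) :
    Indep (⨆ i ∈ Set.Iio n, mβ.comap (X i)) (mβ.comap (X n)) P :=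
  indep_of_indep_of_le_right
    (indep_biSup_compl (fun i => (hX i).comap_le) ((iIndepFun_iff_iIndep _ _ _).1 hind) _)
    (le_iSup₂ (f := fun i (_ : i ∈ (Set.Iio n)ᶜ) => mβ.comap (X i)) n (by simp))

variable {E : Type*} [NormedAddCommGroup E] [MeasurableSpace E] [BorelSpace E]

lemma MeasureTheory.MemLp.comp_of_norm_eq [SecondCountableTopology E] {p : ℝ≥0∞} {f : Ω → E}
    {g : E → E} (hf : MemLp f p P) (hg : Measurable g) (hg_norm : ∀ x, ‖g x‖ = ‖x‖) :
    MemLp (fun ω => g (f ω)) p P :=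
  hf.congr_norm (hg.comp_aemeasurable hf.1.aemeasurable).aestronglyMeasurable
    (ae_of_all _ fun ω => (hg_norm (f ω)).symm)

variable [IsProbabilityMeasure P] [InnerProductSpace ℝ E] [CompleteSpace E]

lemma ProbabilityTheory.IndepFun.integral_norm_sub_sq {a b : Ω → E} (hab : IndepFun a b P)
    (ha : MemLp a 2 P) (hb : MemLp b 2 P) (hb0 : ∫ ω, b ω ∂P = 0) :
    ∫ ω, ‖a ω - b ω‖ ^ 2 ∂P = ∫ ω, ‖a ω‖ ^ 2 ∂P + ∫ ω, ‖b ω‖ ^ 2 ∂P := by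
  have ha2 := (memLp_two_iff_integrable_sq_norm ha.1).1 ha
  have hb2 := (memLp_two_iff_integrable_sq_norm hb.1).1 hb
  have hinner : Integrable (fun ω => ⟪a ω, b ω⟫_ℝ) P :=
    hab.integrable_bilin (ha.integrable one_le_two) (hb.integrable one_le_two) (innerSL ℝ)
  have hcross : ∫ ω, ⟪a ω, b ω⟫_ℝ ∂P = 0 := by
    have h := hab.integral_bilin (ha.integrable one_le_two) (hb.integrable one_le_two) (innerSL ℝ)
    rwa [hb0, map_zero] at h
  have hdiff : Integrable (fun ω => ‖a ω‖ ^ 2 - 2 * ⟪a ω, b ω⟫_ℝ) P :=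
    ha2.sub (hinner.const_mul 2)
  simp_rw [norm_sub_sq_real]
  rw [integral_add hdiff hb2, integral_sub ha2 (hinner.const_mul 2), integral_const_mul, hcross,
    mul_zero, sub_zero]

theorem integral_norm_sq_of_norm_preserving_recursion [SecondCountableTopology E]
    {G Φ : E → E} (hG : Measurable G) (hΦ : Measurable Φ) (hG_norm : ∀ x, ‖G x‖ = ‖x‖)
    (hΦ_norm : ∀ x, ‖Φ x‖ = ‖x‖)
    {ξ : ℕ → Ω → E} (hind : iIndepFun ξ P) (hξ : ∀ n, Measurable (ξ n))
    (hξ_L2 : ∀ n, MemLp (ξ n) 2 P) (hξ_mean : ∀ n, ∫ ω, ξ n ω ∂P = 0)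
    {u : ℕ → Ω → E} {x₀ : E} (hu0 : ∀ ω, u 0 ω = x₀)
    (hrec : ∀ n ω, u (n + 1) ω = G (Φ (u n ω) - ξ n ω)) (n : ℕ) :
    ∫ ω, ‖u n ω‖ ^ 2 ∂P = ‖x₀‖ ^ 2 + ∑ i ∈ Finset.range n, ∫ ω, ‖ξ i ω‖ ^ 2 ∂P := by
  have hpast := measurable_iSup_Iio_of_recursion (F := fun x w => G (Φ x - w))
    (hG.comp ((hΦ.comp measurable_fst).sub measurable_snd)) hu0 hrec
  have hindep (n : ℕ) : IndepFun (fun ω => Φ (u n ω)) (ξ n) P :=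
    (IndepFun_iff_Indep _ _ _).2 <|
      indep_of_indep_of_le_left (indep_iSup_Iio_comap hξ hind n) (hΦ.comp (hpast n)).comap_le
  have hu_L2 (n : ℕ) : MemLp (u n) 2 P := by
    induction n with
    | zero => simpa only [funext hu0] using memLp_const x₀
    | succ n ih =>
      rw [funext (hrec n)]
      exact ((ih.comp_of_norm_eq hΦ hΦ_norm).sub (hξ_L2 n)).comp_of_norm_eq hG hG_norm
  induction n with
  | zero => simp [hu0]
  | succ n ih =>
    calc ∫ ω, ‖u (n + 1) ω‖ ^ 2 ∂P = ∫ ω, ‖Φ (u n ω) - ξ n ω‖ ^ 2 ∂P := by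
          simp_rw [hrec, hG_norm]
      _ = ∫ ω, ‖Φ (u n ω)‖ ^ 2 ∂P + ∫ ω, ‖ξ n ω‖ ^ 2 ∂P :=
          (hindep n).integral_norm_sub_sq ((hu_L2 n).comp_of_norm_eq hΦ hΦ_norm) (hξ_L2 n)
            (hξ_mean n)
      _ = _ := by simp_rw [hΦ_norm]; rw [ih, Finset.sum_range_succ, add_assoc]

end Recursion

theorem stmt9_general {Ω : Type*} [MeasurableSpace Ω] (P : Measure Ω) [IsProbabilityMeasure P]
    [mL2 : MeasurableSpace L2h] [BorelSpace L2h]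
    (u₀ : L2h) (τ α : ℝ)
    (V : C(AddCircle (2 * Real.pi), ℝ))
    (S : L2h ≃ₗᵢ[ℂ] L2h)
    (δW : ℕ → Ω → L2h) (c : ℝ)
    (hind : iIndepFun δW P)
    (hmeas : ∀ n, Measurable (δW n))
    (hmean : ∀ n, ∫ ω, δW n ω ∂P = 0)
    (hsqint : ∀ n, Integrable (fun ω => ‖δW n ω‖ ^ 2) P)
    (hvar : ∀ n, ∫ ω, ‖δW n ω‖ ^ 2 ∂P = c)
    (u : ℕ → Ω → L2h)
    (hu0 : ∀ ω, u 0 ω = u₀)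
    (hrec : ∀ n ω, u (n + 1) ω = S (PhiL V τ (u n ω) - (Complex.I * (α : ℂ)) • δW n ω)) :
    ∀ n : ℕ, ∫ ω, ‖u n ω‖ ^ 2 ∂P = ‖u₀‖ ^ 2 + n * α ^ 2 * c := by
  intro n
  have hnoise_sq (i : ℕ) : ∫ ω, ‖(I * α) • δW i ω‖ ^ 2 ∂P = α ^ 2 * c := by
    simp_rw [norm_smul, mul_pow, norm_mul, norm_I, one_mul, Complex.norm_real, Real.norm_eq_abs,
      sq_abs]
    rw [integral_const_mul, hvar]
  rw [integral_norm_sq_of_norm_preserving_recursion (ξ := fun i ω => (I * α) • δW i ω)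
    S.continuous.measurable (continuous_phiL V τ).measurable S.norm_map (norm_phiL V τ)
    (hind.comp _ fun _ => measurable_const_smul (I * α))
    (fun i => (hmeas i).const_smul (I * (α : ℂ)))
    (fun i => ((memLp_two_iff_integrable_sq_norm (hmeas i).aestronglyMeasurable).2
      (hsqint i)).const_smul (I * (α : ℂ)))
    (fun i => by rw [integral_smul, hmean, smul_zero]) hu0 hrec n]
  simp only [hnoise_sq, Finset.sum_const, Finset.card_range, nsmul_eq_mul]
  ring

/-- Trace formula for the mass of the splitting scheme
`u_{n+1} = S(τ)(Φ_τ(u_n) − i α δW_n)`: for every `n`,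
`𝔼[‖u_n‖²_{L²}] = ‖u₀‖²_{L²} + n α² c`, where `c = 𝔼[‖δW_n‖²_{L²}]`. -/
theorem stmt9 {Ω : Type*} [MeasurableSpace Ω] (P : Measure Ω) [IsProbabilityMeasure P]
    [mL2 : MeasurableSpace L2h] [BorelSpace L2h]
    (u₀ : L2h) (τ α : ℝ) (hτ : 0 < τ) (hα : 0 < α)
    (V : C(AddCircle (2 * Real.pi), ℝ))
    (S : L2h ≃ₗᵢ[ℂ] L2h)
    (hS : ∀ k : ℤ, S (fourierB k) = Complex.exp (Complex.I * τ * (k : ℂ) ^ 2) • fourierB k)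
    (δW : ℕ → Ω → L2h) (c : ℝ) (hc : 0 ≤ c)
    (hind : iIndepFun δW P)
    (hmeas : ∀ n, Measurable (δW n))
    (hint : ∀ n, Integrable (δW n) P)
    (hmean : ∀ n, ∫ ω, δW n ω ∂P = 0)
    (hsqint : ∀ n, Integrable (fun ω => ‖δW n ω‖ ^ 2) P)
    (hvar : ∀ n, ∫ ω, ‖δW n ω‖ ^ 2 ∂P = c)
    (u : ℕ → Ω → L2h)
    (hu0 : ∀ ω, u 0 ω = u₀)
    (hrec : ∀ n ω, u (n + 1) ω = S (PhiL V τ (u n ω) - (Complex.I * (α : ℂ)) • δW n ω)) :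
    ∀ n : ℕ, ∫ ω, ‖u n ω‖ ^ 2 ∂P = ‖u₀‖ ^ 2 + n * α ^ 2 * c :=
  stmt9_general P (mL2 := mL2) u₀ τ α V S δW c hind hmeas hmean hsqint hvar u hu0 hrec
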